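/- arXiv:1212.2697 — 3 statements merged into one kernel-verified Lean document; each statement's English description precedes it below -/
import Mathlib

section
/- Let u ∈ A_{2n}(1243) (n ≥ 1) with the same functions f and e as for odd length. For positive integers v_1, v_2, the permutation w = v_1 ↦ (v_2 ↦ u) of {1,...,2n+2} is a 1243-avoiding alternating permutation if and only if e(u) < v_1 ≤ v_2 and max{u_1+1, f(u)+1} ≤ v_2 ≤ 2n+1. -/
/-- `u` is a permutation of `{1,...,m}`, given as the word `u 0, u 1, ..., u (m-1)`. -/
def IsPermOn (m : ℕ) (u : Fin m → ℕ) : Prop :=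
  Function.Injective u ∧ ∀ i, u i ∈ Finset.Icc 1 m

/-- up-down (alternating): u 0 < u 1 > u 2 < u 3 > ... -/
def UpDown (m : ℕ) (u : Fin m → ℕ) : Prop :=
  ∀ i : ℕ, ∀ h : i + 1 < m,
    (i % 2 = 0 → u ⟨i, by omega⟩ < u ⟨i + 1, h⟩) ∧
    (i % 2 = 1 → u ⟨i + 1, h⟩ < u ⟨i, by omega⟩)

/-- down-up: u 0 > u 1 < u 2 > u 3 < ... -/
def DownUp (m : ℕ) (u : Fin m → ℕ) : Prop :=
  ∀ i : ℕ, ∀ h : i + 1 < m,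
    (i % 2 = 0 → u ⟨i + 1, h⟩ < u ⟨i, by omega⟩) ∧
    (i % 2 = 1 → u ⟨i, by omega⟩ < u ⟨i + 1, h⟩)

/-- `u` contains the pattern `σ`. -/
def Contains {m k : ℕ} (u : Fin m → ℕ) (σ : Fin k → ℕ) : Prop :=
  ∃ g : Fin k → Fin m, StrictMono g ∧ ∀ a b : Fin k, u (g a) < u (g b) ↔ σ a < σ b

def Avoids {m k : ℕ} (u : Fin m → ℕ) (σ : Fin k → ℕ) : Prop := ¬ Contains u σ

/-- The set `A_m(σ)` of σ-avoiding up-down alternating permutations of `{1,...,m}`. -/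
def AvoidSet (m : ℕ) {k : ℕ} (σ : Fin k → ℕ) : Set (Fin m → ℕ) :=
  {u | IsPermOn m u ∧ UpDown m u ∧ Avoids u σ}

def p1234 : Fin 4 → ℕ := ![1, 2, 3, 4]
def p1243 : Fin 4 → ℕ := ![1, 2, 4, 3]
def p2143 : Fin 4 → ℕ := ![2, 1, 4, 3]
def p4312 : Fin 4 → ℕ := ![4, 3, 1, 2]
def p3412 : Fin 4 → ℕ := ![3, 4, 1, 2]

/-- `f(u)`: max over 0 and the smaller entries of 21-patterns of `u`. -/
noncomputable def fval {m : ℕ} (u : Fin m → ℕ) : ℕ :=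
  sSup ({0} ∪ {x | ∃ i j : Fin m, i < j ∧ u j < u i ∧ x = u j})

/-- `e(u)`: max over 0 and the smallest entries of 132-patterns of `u`. -/
noncomputable def eval' {m : ℕ} (u : Fin m → ℕ) : ℕ :=
  sSup ({0} ∪ {x | ∃ i j k : Fin m, i < j ∧ j < k ∧ u i < u k ∧ u k < u j ∧ x = u i})

/-- `g(u)`: min over m+1 and the largest entries of 312-patterns of `u`. -/
noncomputable def gval {m : ℕ} (u : Fin m → ℕ) : ℕ :=
  sInf ({m + 1} ∪ {x | ∃ i j k : Fin m, i < j ∧ j < k ∧ u j < u k ∧ u k < u i ∧ x = u i})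

/-- `h(u)`: min over m+1 and the larger entries of 12-patterns of `u`. -/
noncomputable def hval {m : ℕ} (u : Fin m → ℕ) : ℕ :=
  sInf ({m + 1} ∪ {x | ∃ i j : Fin m, i < j ∧ u i < u j ∧ x = u j})

/-- the operation `v ↦ u`: prepend `v`, increasing every entry `≥ v` by 1. -/
def ins {m : ℕ} (v : ℕ) (u : Fin m → ℕ) : Fin (m + 1) → ℕ :=
  Fin.cases v (fun j => if u j < v then u j else u j + 1)

/-- standardization of a word with distinct entries. -/
def stWord {k : ℕ} (r : Fin k → ℕ) : Fin k → ℕ :=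
  fun j => (Finset.univ.filter (fun i => r i ≤ r j)).card


/-! Prepending shifts the old entries by a strictly monotone map, so alternation and
1243-avoidance of the tail are inherited from `u`; only patterns through the two new letters
matter. A 1243 starting at the first letter `v` of `v ↦ u` is a 132 of `u` with all entries
`≥ v`, which `e(u) < v` excludes; a 132 of `v₂ ↦ u` starting at `v₂` is an inversion of `u`
above `v₂`, which `f(u) < v₂` excludes. At the front, alternation reads `v₁ ≤ v₂` and
`u₁ < v₂`. -/

def bump (v x : ℕ) : ℕ := if x < v then x else x + 1

lemma bump_strictMono (v : ℕ) : StrictMono (bump v) := by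
  intro x y h; unfold bump; split_ifs <;> omega

lemma bump_lt_bump_iff {v x y : ℕ} : bump v x < bump v y ↔ x < y :=
  (bump_strictMono v).lt_iff_lt

lemma bump_of_le {v x : ℕ} (h : v ≤ x) : bump v x = x + 1 := if_neg h.not_gt

lemma bump_ne (v x : ℕ) : bump v x ≠ v := by
  unfold bump; split_ifs <;> omega

lemma lt_bump_iff {v x : ℕ} : v < bump v x ↔ v ≤ x := by
  unfold bump; split_ifs <;> omega

lemma le_bump_iff_of_le {v w x : ℕ} (h : w ≤ v) : w ≤ bump v x ↔ w ≤ x := by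
  unfold bump; split_ifs <;> omega

lemma bump_lt_iff_of_le {v w x : ℕ} (h : w ≤ v) : bump v x < w ↔ x < w := by
  unfold bump; split_ifs <;> omega

section Patterns

variable {m : ℕ}

def HasInversionFrom (u : Fin m → ℕ) (v : ℕ) : Prop :=
  ∃ i j : Fin m, i < j ∧ v ≤ u j ∧ u j < u i

def Has132From (u : Fin m → ℕ) (v : ℕ) : Prop :=
  ∃ i j k : Fin m, i < j ∧ j < k ∧ v ≤ u i ∧ u i < u k ∧ u k < u j

lemma Has132From.mono {u : Fin m → ℕ} {v₁ v₂ : ℕ} (h : v₁ ≤ v₂) :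
    Has132From u v₂ → Has132From u v₁
  | ⟨i, j, k, hij, hjk, hvi, hik, hkj⟩ => ⟨i, j, k, hij, hjk, h.trans hvi, hik, hkj⟩

lemma sSup_zero_union_lt_iff {S : Set ℕ} (hS : S.Finite) {v : ℕ} (hv : 0 < v) :
    sSup ({0} ∪ S) < v ↔ ∀ x ∈ S, x < v := by
  rw [((Set.finite_singleton 0).union hS).csSup_lt_iff (by simp)]
  simp [hv]

lemma fval_lt_iff (u : Fin m → ℕ) {v : ℕ} (hv : 0 < v) :
    fval u < v ↔ ¬ HasInversionFrom u v := by
  rw [fval, sSup_zero_union_lt_iff ((Set.finite_range u).subset ?_) hv]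
  · exact ⟨fun h ⟨i, j, hij, hvj, hji⟩ => (h _ ⟨i, j, hij, hji, rfl⟩).not_ge hvj,
      fun h _ ⟨i, j, hij, hji, hx⟩ => hx ▸ lt_of_not_ge fun hvj => h ⟨i, j, hij, hvj, hji⟩⟩
  · rintro _ ⟨-, j, -, -, rfl⟩
    exact ⟨j, rfl⟩

lemma eval'_lt_iff (u : Fin m → ℕ) {v : ℕ} (hv : 0 < v) :
    eval' u < v ↔ ¬ Has132From u v := by
  rw [eval', sSup_zero_union_lt_iff ((Set.finite_range u).subset ?_) hv]
  · exact ⟨fun h ⟨i, j, k, hij, hjk, hvi, hik, hkj⟩ =>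
        (h _ ⟨i, j, k, hij, hjk, hik, hkj, rfl⟩).not_ge hvi,
      fun h _ ⟨i, j, k, hij, hjk, hik, hkj, hx⟩ =>
        hx ▸ lt_of_not_ge fun hvi => h ⟨i, j, k, hij, hjk, hvi, hik, hkj⟩⟩
  · rintro _ ⟨i, -, -, -, -, -, -, rfl⟩
    exact ⟨i, rfl⟩

lemma contains_p1243_iff {w : Fin m → ℕ} :
    Contains w p1243 ↔
      ∃ a b c d : Fin m, a < b ∧ b < c ∧ c < d ∧ w a < w b ∧ w b < w d ∧ w d < w c := by
  constructor
  · rintro ⟨g, hg, hiff⟩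
    exact ⟨g 0, g 1, g 2, g 3, hg (by decide), hg (by decide), hg (by decide),
      (hiff 0 1).2 (by decide), (hiff 1 3).2 (by decide), (hiff 3 2).2 (by decide)⟩
  · rintro ⟨a, b, c, d, hab, hbc, hcd, h1, h2, h3⟩
    refine ⟨![a, b, c, d], ?_, fun s t => ?_⟩
    · refine Fin.strictMono_iff_lt_succ.2 fun i => ?_
      fin_cases i <;> simpa
    · fin_cases s <;> fin_cases t <;> simp [p1243] <;> omega

end Patterns

section Insertion

variable {m : ℕ}

lemma ins_eq_cons (v : ℕ) (u : Fin m → ℕ) : ins v u = Fin.cons v (fun j => bump v (u j)) := rfl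

@[simp]
lemma ins_zero (v : ℕ) (u : Fin m → ℕ) : ins v u 0 = v := rfl

@[simp]
lemma ins_succ (v : ℕ) (u : Fin m → ℕ) (j : Fin m) : ins v u j.succ = bump v (u j) := rfl

lemma isPermOn_ins {u : Fin m → ℕ} (hu : IsPermOn m u) {v : ℕ} (h1 : 1 ≤ v) (h2 : v ≤ m + 1) :
    IsPermOn (m + 1) (ins v u) := by
  refine ⟨?_, fun i => ?_⟩
  · rw [ins_eq_cons, Fin.cons_injective_iff]
    exact ⟨fun ⟨j, hj⟩ => bump_ne v (u j) hj, (bump_strictMono v).injective.comp hu.1⟩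
  · cases i using Fin.cases with
    | zero => simp [h1, h2]
    | succ j =>
      have := Finset.mem_Icc.1 (hu.2 j)
      simp only [ins_succ, bump, Finset.mem_Icc]
      split_ifs <;> omega

lemma contains_p1243_ins_iff (v : ℕ) (u : Fin m → ℕ) :
    Contains (ins v u) p1243 ↔ Contains u p1243 ∨ Has132From u v := by
  rw [contains_p1243_iff, contains_p1243_iff]
  constructor
  · rintro ⟨a, b, c, d, hab, hbc, hcd, h1, h2, h3⟩
    obtain ⟨b, rfl⟩ := Fin.exists_succ_eq.2 (Fin.ne_zero_of_lt hab)
    obtain ⟨c, rfl⟩ := Fin.exists_succ_eq.2 (Fin.ne_zero_of_lt hbc)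
    obtain ⟨d, rfl⟩ := Fin.exists_succ_eq.2 (Fin.ne_zero_of_lt hcd)
    simp only [ins_succ, bump_lt_bump_iff, Fin.succ_lt_succ_iff] at hbc hcd h2 h3
    cases a using Fin.cases with
    | zero => exact Or.inr ⟨b, c, d, hbc, hcd, lt_bump_iff.1 h1, h2, h3⟩
    | succ a =>
      rw [ins_succ, ins_succ, bump_lt_bump_iff] at h1
      exact Or.inl ⟨a, b, c, d, Fin.succ_lt_succ_iff.1 hab, hbc, hcd, h1, h2, h3⟩
  · rintro (⟨a, b, c, d, hab, hbc, hcd, h1, h2, h3⟩ | ⟨i, j, k, hij, hjk, hvi, hik, hkj⟩)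
    · exact ⟨a.succ, b.succ, c.succ, d.succ,
        by simpa [bump_lt_bump_iff] using ⟨hab, hbc, hcd, h1, h2, h3⟩⟩
    · exact ⟨0, i.succ, j.succ, k.succ,
        by simpa [bump_lt_bump_iff, lt_bump_iff] using ⟨hij, hjk, hvi, hik, hkj⟩⟩

lemma has132From_ins_iff {v₁ v₂ : ℕ} (h : v₁ ≤ v₂) (u : Fin m → ℕ) :
    Has132From (ins v₂ u) v₁ ↔ HasInversionFrom u v₂ ∨ Has132From u v₁ := by
  constructor
  · rintro ⟨i, j, k, hij, hjk, hvi, hik, hkj⟩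
    obtain ⟨j, rfl⟩ := Fin.exists_succ_eq.2 (Fin.ne_zero_of_lt hij)
    obtain ⟨k, rfl⟩ := Fin.exists_succ_eq.2 (Fin.ne_zero_of_lt hjk)
    simp only [ins_succ, bump_lt_bump_iff, Fin.succ_lt_succ_iff] at hjk hkj
    cases i using Fin.cases with
    | zero => exact Or.inl ⟨j, k, hjk, lt_bump_iff.1 hik, hkj⟩
    | succ i =>
      rw [ins_succ, ins_succ, bump_lt_bump_iff] at hik
      rw [ins_succ, le_bump_iff_of_le h] at hvi
      exact Or.inr ⟨i, j, k, Fin.succ_lt_succ_iff.1 hij, hjk, hvi, hik, hkj⟩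
  · rintro (⟨i, j, hij, hvj, hji⟩ | ⟨i, j, k, hij, hjk, hvi, hik, hkj⟩)
    · exact ⟨0, i.succ, j.succ, Fin.succ_pos i, Fin.succ_lt_succ_iff.2 hij, h,
        by simpa [bump_lt_bump_iff, lt_bump_iff] using ⟨hvj, hji⟩⟩
    · exact ⟨i.succ, j.succ, k.succ,
        by simpa [bump_lt_bump_iff, le_bump_iff_of_le h] using ⟨hij, hjk, hvi, hik, hkj⟩⟩

lemma avoids_ins_ins_iff {v₁ v₂ : ℕ} (h : v₁ ≤ v₂) (u : Fin m → ℕ) :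
    Avoids (ins v₁ (ins v₂ u)) p1243 ↔
      Avoids u p1243 ∧ ¬ HasInversionFrom u v₂ ∧ ¬ Has132From u v₁ := by
  simp only [Avoids, contains_p1243_ins_iff, has132From_ins_iff h]
  have := Has132From.mono (u := u) h
  tauto

end Insertion

section Alternation

variable {m : ℕ}

lemma upDown_comp_iff {f : ℕ → ℕ} (hf : StrictMono f) (u : Fin m → ℕ) :
    UpDown m (f ∘ u) ↔ UpDown m u := by
  simp only [UpDown, Function.comp_apply, hf.lt_iff_lt]

lemma upDown_add_two_iff (w : Fin (m + 1 + 1) → ℕ) :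
    UpDown (m + 1 + 1) w ↔
      w 0 < w 1 ∧ (∀ h : 0 < m, w ⟨2, by omega⟩ < w 1) ∧ UpDown m (fun k => w k.succ.succ) := by
  constructor
  · intro hw
    refine ⟨(hw 0 (by omega)).1 rfl, fun _ => (hw 1 (by omega)).2 rfl, fun i h => ?_⟩
    have := hw (i + 2) (by omega)
    exact ⟨fun hi => this.1 (by omega), fun hi => this.2 (by omega)⟩
  · rintro ⟨h01, h21, hw⟩ i h
    match i with
    | 0 => exact ⟨fun _ => h01, by simp⟩
    | 1 => exact ⟨by simp, fun _ => h21 (by omega)⟩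
    | i + 2 =>
      have := hw i (by omega)
      exact ⟨fun hi => this.1 (by omega), fun hi => this.2 (by omega)⟩

lemma upDown_ins_ins_iff (v₁ v₂ : ℕ) (u : Fin m → ℕ) :
    UpDown (m + 1 + 1) (ins v₁ (ins v₂ u)) ↔
      v₁ ≤ v₂ ∧ (∀ h : 0 < m, u ⟨0, h⟩ < v₂) ∧ UpDown m u := by
  rw [upDown_add_two_iff]
  refine and_congr lt_bump_iff (and_congr (forall_congr' fun h => ?_) ?_)
  · exact bump_lt_bump_iff.trans (bump_lt_iff_of_le le_rfl)
  · exact upDown_comp_iff ((bump_strictMono v₁).comp (bump_strictMono v₂)) u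

end Alternation

theorem stmt5 (n : ℕ) (hn : 1 ≤ n) (u : Fin (2 * n) → ℕ) (hu : u ∈ AvoidSet (2 * n) p1243)
    (v1 v2 : ℕ) (hv1 : 1 ≤ v1) (hv2 : 1 ≤ v2) :
    ins v1 (ins v2 u) ∈ AvoidSet (2 * n + 1 + 1) p1243 ↔
      eval' u < v1 ∧ v1 ≤ v2 ∧
        max (u ⟨0, by omega⟩ + 1) (fval u + 1) ≤ v2 ∧ v2 ≤ 2 * n + 1 := by
  obtain ⟨hperm, hud, havoid⟩ := hu
  simp only [AvoidSet, Set.mem_ofPred_eq, upDown_ins_ins_iff, hud, and_true, max_le_iff,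
    Nat.add_one_le_iff]
  constructor
  · rintro ⟨hw, ⟨h12, hu0⟩, hwav⟩
    obtain ⟨-, hinv, h132⟩ := (avoids_ins_ins_iff h12 u).1 hwav
    have htop := (Finset.mem_Icc.1 (hw.2 (Fin.succ 0))).2
    rw [ins_succ, ins_zero, bump_of_le h12] at htop
    exact ⟨(eval'_lt_iff u hv1).2 h132, h12,
      ⟨hu0 (by omega), (fval_lt_iff u hv2).2 hinv⟩, by omega⟩
  · rintro ⟨he, h12, ⟨hu0, hf⟩, htop⟩
    exact ⟨isPermOn_ins (isPermOn_ins hperm hv2 htop) hv1 (by omega),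
      ⟨h12, fun _ => hu0⟩,
      (avoids_ins_ins_iff h12 u).2 ⟨havoid, (fval_lt_iff u hv2).1 hf, (eval'_lt_iff u hv1).1 he⟩⟩
end

section
/- If u ∈ A_{2n+1}(1243) with u_2 = 2n+1 and u_1 < u_3, then u_4 = u_3 + 1. -/
/-!
Since `u_3 < u_4` by alternation, if `u_4 ≠ u_3 + 1` then the value `u_3 + 1` lies strictly
between `u_3` and `u_4`, so it is neither `u_2 = 2n + 1` nor any of `u_1, u_3, u_4`. It therefore
occurs at some position after `4`, and `u_1 u_3 u_4 (u_3 + 1)` is an occurrence of `1243`.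
-/

lemma IsPermOn.image_univ {m : ℕ} {u : Fin m → ℕ} (hu : IsPermOn m u) :
    Finset.univ.image u = Finset.Icc 1 m :=
  Finset.eq_of_subset_of_card_le (by simpa [Finset.image_subset_iff] using hu.2)
    (by rw [Finset.card_image_of_injective _ hu.1]; simp)

lemma IsPermOn.exists_eq {m : ℕ} {u : Fin m → ℕ} (hu : IsPermOn m u) {x : ℕ}
    (hx : x ∈ Finset.Icc 1 m) : ∃ i, u i = x := by
  rw [← hu.image_univ] at hx
  simpa using hx

lemma contains_p1243_of_lt {m : ℕ} {u : Fin m → ℕ} {i j k l : Fin m}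
    (hij : i < j) (hjk : j < k) (hkl : k < l)
    (hu_ij : u i < u j) (hu_jl : u j < u l) (hu_lk : u l < u k) : Contains u p1243 := by
  refine ⟨![i, j, k, l], Fin.strictMono_iff_lt_succ.2 fun a => ?_, fun a b => ?_⟩
  · fin_cases a <;> assumption
  · fin_cases a <;> fin_cases b <;> simp [p1243] <;> omega

theorem stmt11 (n : ℕ) (hn : 1 ≤ n) (u : Fin (2 * n + 1) → ℕ)
    (hu : u ∈ AvoidSet (2 * n + 1) p1243)
    (h2 : u ⟨1, by omega⟩ = 2 * n + 1)
    (h13 : u ⟨0, by omega⟩ < u ⟨2, by omega⟩) :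
    ∀ h4 : 3 < 2 * n + 1, u ⟨3, h4⟩ = u ⟨2, by omega⟩ + 1 := by
  intro h4
  obtain ⟨hperm, hud, havoid⟩ := hu
  have h23 : u ⟨2, by omega⟩ < u ⟨3, h4⟩ := (hud 2 h4).1 rfl
  have h3_le : u ⟨3, h4⟩ ≤ 2 * n + 1 := (Finset.mem_Icc.1 (hperm.2 _)).2
  by_contra hne
  obtain ⟨⟨k, hk⟩, hk_eq⟩ := hperm.exists_eq (x := u ⟨2, by omega⟩ + 1)
    (Finset.mem_Icc.2 ⟨by omega, by omega⟩)
  have h3k : 3 < k := by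
    by_contra! hk3
    interval_cases k <;> omega
  exact havoid (contains_p1243_of_lt (i := ⟨0, by omega⟩) (j := ⟨2, by omega⟩) (k := ⟨3, h4⟩)
    (l := ⟨k, hk⟩) (Fin.mk_lt_mk.2 (by omega)) (Fin.mk_lt_mk.2 (by omega)) (Fin.mk_lt_mk.2 h3k)
    h13 (by omega) (by omega))
end

section
/- An alternating permutation u = u_1 ··· u_{2n} ∈ A_{2n}(3412) satisfies max{u_i : ∃ j > i with u_i < u_j} = 2n - 1 if and only if u_{2n} = 2n. -/
/-- `max{u_i : ∃ j > i with u_i < u_j}` (max over 0 and such entries). -/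
noncomputable def dval {m : ℕ} (u : Fin m → ℕ) : ℕ :=
  sSup ({0} ∪ {x | ∃ i j : Fin m, i < j ∧ u i < u j ∧ x = u i})

/-!
If the value `m - 1` of an alternating permutation `u` of `{1, …, m}` (with `m` even) lies to the
left of some larger entry, that entry is `m`. Suppose `m` sits at position `j` before the end. It
cannot be at an ascent position, so `j` is odd and is followed by an ascent `u (j+1) < u (j+2)`;
together with `m - 1, m` these form a `3412`. Conversely, if `u` ends with `m`, every entry before
it (in particular `m - 1`) is followed by a larger one, and no entry other than `m` can be.
-/

section dval

variable {m : ℕ} {u : Fin m → ℕ}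

lemma bddAbove_dval_set (u : Fin m → ℕ) :
    BddAbove ({0} ∪ {x | ∃ i j : Fin m, i < j ∧ u i < u j ∧ x = u i}) := by
  refine ((Set.finite_range u).insert 0 |>.subset ?_).bddAbove
  rintro x (rfl | ⟨i, -, -, -, rfl⟩)
  · exact Set.mem_insert _ _
  · exact Set.mem_insert_of_mem _ ⟨i, rfl⟩

lemma le_dval {i j : Fin m} (hij : i < j) (h : u i < u j) : u i ≤ dval u :=
  le_csSup (bddAbove_dval_set u) (Or.inr ⟨i, j, hij, h, rfl⟩)

lemma dval_le {b : ℕ} (h : ∀ i j : Fin m, i < j → u i < u j → u i ≤ b) : dval u ≤ b := by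
  refine csSup_le ⟨0, Or.inl rfl⟩ ?_
  rintro x (rfl | ⟨i, j, hij, hu, rfl⟩)
  · exact Nat.zero_le b
  · exact h i j hij hu

lemma exists_apply_eq_dval (h : dval u ≠ 0) :
    ∃ i j : Fin m, i < j ∧ u i < u j ∧ u i = dval u := by
  rcases Nat.sSup_mem ⟨0, Or.inl rfl⟩ (bddAbove_dval_set u) with h0 | ⟨i, j, hij, hu, hi⟩
  · exact absurd h0 h
  · exact ⟨i, j, hij, hu, hi.symm⟩

end dval

namespace IsPermOn

variable {m : ℕ} {u : Fin m → ℕ}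

lemma le (hu : IsPermOn m u) (i : Fin m) : u i ≤ m :=
  (Finset.mem_Icc.mp (hu.2 i)).2

lemma exists_apply_eq (hu : IsPermOn m u) {v : ℕ} (hv : v ∈ Finset.Icc 1 m) : ∃ i, u i = v := by
  have himage : Finset.univ.image u = Finset.Icc 1 m :=
    Finset.eq_of_subset_of_card_le (by simpa [Finset.subset_iff] using hu.2)
      (by simp [Finset.card_image_of_injective _ hu.1])
  rw [← himage] at hv
  simpa using hv

lemma dval_eq_of_apply_last (hu : IsPermOn m u) (hm : 0 < m)
    (hlast : u ⟨m - 1, by omega⟩ = m) : dval u = m - 1 := by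
  refine le_antisymm (dval_le fun i j _ hij => by have := hu.le j; omega) ?_
  obtain hm1 | rfl : 1 < m ∨ m = 1 := by omega
  · obtain ⟨i, hi⟩ := hu.exists_apply_eq (v := m - 1) (Finset.mem_Icc.mpr ⟨by omega, by omega⟩)
    have hi_lt : i < ⟨m - 1, by omega⟩ := by
      refine lt_of_le_of_ne (Fin.le_iff_val_le_val.mpr (Nat.le_sub_one_of_lt i.isLt)) ?_
      intro h
      rw [h, hlast] at hi
      omega
    calc m - 1 = u i := hi.symm
      _ ≤ dval u := le_dval hi_lt (by omega)
  · exact Nat.zero_le _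

end IsPermOn

lemma contains_p3412 {m : ℕ} {u : Fin m → ℕ} {i j k l : Fin m} (hij : i < j) (hjk : j < k)
    (hkl : k < l) (hukl : u k < u l) (huli : u l < u i) (huij : u i < u j) :
    Contains u p3412 := by
  refine ⟨![i, j, k, l], ?_, fun a b => ?_⟩
  · rw [Fin.strictMono_iff_lt_succ]
    intro a
    fin_cases a <;> simpa
  · fin_cases a <;> fin_cases b <;> simp [p3412] <;> omega

lemma val_eq_sub_one_of_lt_of_apply_eq {m : ℕ} {u : Fin m → ℕ} (hu : u ∈ AvoidSet m p3412) (hm : Even m)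
    {i j : Fin m} (hij : i < j) (hi : u i = m - 1) (hj : u j = m) : (j : ℕ) = m - 1 := by
  obtain ⟨hperm, hud, hav⟩ := hu
  have hij' := Fin.lt_def.mp hij
  by_contra hne
  have hj1 : (j : ℕ) + 1 < m := by omega
  rcases Nat.mod_two_eq_zero_or_one j with heven | hodd
  · have hlt := (hud j hj1).1 heven
    have hle := hperm.le ⟨j + 1, hj1⟩
    simp only [Fin.eta, hj] at hlt
    omega
  · have hj2 : (j : ℕ) + 2 < m := by obtain ⟨r, hr⟩ := hm; omega
    let k : Fin m := ⟨j + 1, hj1⟩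
    let l : Fin m := ⟨j + 2, hj2⟩
    have hukl : u k < u l := (hud (j + 1) hj2).1 (by omega)
    have hulj : u l ≠ u j := hperm.1.ne (Fin.ne_of_val_ne (by dsimp [l]; omega))
    have huli : u l ≠ u i := hperm.1.ne (Fin.ne_of_val_ne (by dsimp [l]; omega))
    have hul := hperm.le l
    exact hav (contains_p3412 hij (Fin.lt_def.mpr (by simp [k])) (Fin.lt_def.mpr (by simp [k, l]))
      hukl (by omega) (by omega))

theorem stmt17 (n : ℕ) (hn : 1 ≤ n) (u : Fin (2 * n) → ℕ) (hu : u ∈ AvoidSet (2 * n) p3412) :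
    dval u = 2 * n - 1 ↔ u ⟨2 * n - 1, by omega⟩ = 2 * n := by
  refine ⟨fun hd => ?_, hu.1.dval_eq_of_apply_last (by omega)⟩
  obtain ⟨i, j, hij, hlt, hi⟩ := exists_apply_eq_dval (u := u) (by omega)
  have hj : u j = 2 * n := by have := hu.1.le j; omega
  have hlast := val_eq_sub_one_of_lt_of_apply_eq hu (even_two_mul n) hij (hi.trans hd) hj
  rwa [show (⟨2 * n - 1, by omega⟩ : Fin (2 * n)) = j from Fin.ext hlast.symm]
end
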